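/- arXiv:1103.2519 — 4 statements merged into one kernel-verified Lean document; each statement's English description precedes it below -/
import Mathlib

section
/- Let Ω be a countable set, V₁,…,V_m ⊆ Ω nonempty finite subsets, κ a positive measure on Ω, and constants C_u ≥ 1, λ > 0. Suppose (1) |V_i|/|V_j| ≤ C_u for all i,j; (2) κ(V_i) ≥ λ|V_i| for all i; (3) ∑_{i=1}^m 1_{V_i}(ω) ≤ C_u|V₁| for every ω ∈ Ω. Then there is a subset I ⊆ {1,…,m} such that κ(⋃_{i∈I} V_i) ≥ λm/(4C_u²) and κ(⋃_{i∈I} V_i) ≥ λ|I||V₁|/(4C_u²). -/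
open Finset

/-- The "Basic Lemma" from Weiss's proof of Lindenstrauss's pointwise ergodic theorem. -/
theorem basic_lemma {Ω : Type*} [Countable Ω] [DecidableEq Ω] (m : ℕ) (hm : 0 < m)
    (V : Fin m → Finset Ω) (hVne : ∀ i, (V i).Nonempty)
    (κ : Ω → ℝ) (hκ : ∀ ω, 0 ≤ κ ω)
    (Cu lam : ℝ) (hCu : 1 ≤ Cu) (hlam : 0 < lam)
    (h1 : ∀ i j, ((V i).card : ℝ) ≤ Cu * (V j).card)
    (h2 : ∀ i, lam * (V i).card ≤ ∑ ω ∈ V i, κ ω)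
    (h3 : ∀ ω : Ω, ((Finset.univ.filter fun i => ω ∈ V i).card : ℝ) ≤ Cu * (V ⟨0, hm⟩).card) :
    ∃ I : Finset (Fin m),
      lam * m / (4 * Cu ^ 2) ≤ ∑ ω ∈ I.biUnion V, κ ω ∧
      lam * I.card * (V ⟨0, hm⟩).card / (4 * Cu ^ 2) ≤ ∑ ω ∈ I.biUnion V, κ ω := by
  classical
  have hCu0 : (0:ℝ) < Cu := lt_of_lt_of_le one_pos hCu
  set n0 : ℝ := ((V ⟨0, hm⟩).card : ℝ) with hn0def
  have hn0pos : 0 < n0 := by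
    rw [hn0def]
    exact_mod_cast (hVne ⟨0, hm⟩).card_pos
  -- choose I maximizing f
  obtain ⟨I, -, hImax⟩ := Finset.exists_max_image (Finset.univ : Finset (Finset (Fin m)))
    (fun J => ∑ ω ∈ J.biUnion V, κ ω - (lam/2) * ∑ i ∈ J, ((V i).card : ℝ))
    ⟨∅, mem_univ _⟩
  refine ⟨I, ?_, ?_⟩
  · -- first inequality
    set U := I.biUnion V with hU
    set S := ∑ ω ∈ U, κ ω with hS
    -- every i has κ(V i ∩ U) ≥ (lam/2)|V i|
    have key : ∀ i : Fin m, lam/2 * ((V i).card : ℝ) ≤ ∑ ω ∈ V i ∩ U, κ ω := by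
      intro i
      by_cases hi : i ∈ I
      · have hsub : V i ⊆ U := Finset.subset_biUnion_of_mem V hi
        rw [Finset.inter_eq_left.mpr hsub]
        have := h2 i
        nlinarith [(Nat.cast_nonneg (V i).card : (0:ℝ) ≤ ((V i).card : ℝ))]
      · have hmax := hImax (insert i I) (mem_univ _)
        rw [Finset.biUnion_insert, Finset.sum_insert hi] at hmax
        have hunion : ∑ ω ∈ V i ∪ U, κ ω + ∑ ω ∈ V i ∩ U, κ ω
            = ∑ ω ∈ V i, κ ω + ∑ ω ∈ U, κ ω := Finset.sum_union_inter
        have := h2 i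
        linarith
    -- sum over all i and swap
    have hsum : ∑ i : Fin m, ∑ ω ∈ V i ∩ U, κ ω
        = ∑ ω ∈ U, ((Finset.univ.filter fun i => ω ∈ V i).card : ℝ) * κ ω := by
      have h1' : ∀ i : Fin m, ∑ ω ∈ V i ∩ U, κ ω
          = ∑ ω ∈ U, (if ω ∈ V i then κ ω else 0) := by
        intro i
        rw [Finset.inter_comm, ← Finset.filter_mem_eq_inter, Finset.sum_filter]
      rw [Finset.sum_congr rfl fun i _ => h1' i, Finset.sum_comm]
      refine Finset.sum_congr rfl fun ω _ => ?_
      rw [← Finset.sum_filter, Finset.sum_const, nsmul_eq_mul]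
    have hub : ∑ i : Fin m, ∑ ω ∈ V i ∩ U, κ ω ≤ Cu * n0 * S := by
      rw [hsum, hS, Finset.mul_sum]
      refine Finset.sum_le_sum fun ω _ => ?_
      exact mul_le_mul_of_nonneg_right (h3 ω) (hκ ω)
    have hlb : lam/2 * (m * (n0 / Cu)) ≤ ∑ i : Fin m, ∑ ω ∈ V i ∩ U, κ ω := by
      have : ∀ i : Fin m, lam/2 * (n0 / Cu) ≤ ∑ ω ∈ V i ∩ U, κ ω := by
        intro i
        refine le_trans ?_ (key i)
        have h' : n0 / Cu ≤ ((V i).card : ℝ) := by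
          rw [div_le_iff₀ hCu0, hn0def]
          nlinarith [h1 ⟨0, hm⟩ i]
        exact mul_le_mul_of_nonneg_left h' (by positivity)
      calc lam/2 * (m * (n0 / Cu)) = ∑ _i : Fin m, lam/2 * (n0 / Cu) := by
            rw [Finset.sum_const, Finset.card_univ, Fintype.card_fin, nsmul_eq_mul]; ring
        _ ≤ _ := Finset.sum_le_sum fun i _ => this i
    have hSpos : lam/2 * (m * (n0 / Cu)) ≤ Cu * n0 * S := le_trans hlb hub
    rw [div_le_iff₀ (by positivity)]
    have hmnn : (0:ℝ) ≤ (m:ℝ) := Nat.cast_nonneg m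
    have h4 : lam/2 * (m * (n0 / Cu)) = lam * m * n0 / (2*Cu) := by
      field_simp
    rw [h4, div_le_iff₀ (by positivity)] at hSpos
    have hmpos : (0:ℝ) < m := by exact_mod_cast hm
    nlinarith [mul_pos hlam hmpos]
  · -- second inequality
    have hmax := hImax ∅ (mem_univ _)
    simp only [Finset.biUnion_empty, Finset.sum_empty, mul_zero, sub_zero] at hmax
    have hSge : lam/2 * ∑ i ∈ I, ((V i).card : ℝ) ≤ ∑ ω ∈ I.biUnion V, κ ω := by
      linarith
    have hcard : (I.card : ℝ) * (n0 / Cu) ≤ ∑ i ∈ I, ((V i).card : ℝ) := by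
      calc (I.card : ℝ) * (n0 / Cu) = ∑ _i ∈ I, n0 / Cu := by
            rw [Finset.sum_const, nsmul_eq_mul]
        _ ≤ _ := by
            refine Finset.sum_le_sum fun i _ => ?_
            rw [div_le_iff₀ hCu0, hn0def]
            nlinarith [h1 ⟨0, hm⟩ i]
    have hIc : (0:ℝ) ≤ (I.card : ℝ) := Nat.cast_nonneg _
    rw [div_le_iff₀ (by positivity)]
    have : lam/2 * ((I.card : ℝ) * (n0 / Cu)) ≤ ∑ ω ∈ I.biUnion V, κ ω := by
      refine le_trans ?_ hSge
      exact mul_le_mul_of_nonneg_left hcard (by positivity)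
    have h5 : lam/2 * ((I.card : ℝ) * (n0 / Cu)) = lam * I.card * n0 / (2*Cu) := by
      field_simp
    rw [h5, div_le_iff₀ (by positivity)] at this
    nlinarith [mul_nonneg (mul_nonneg hlam.le hIc) hn0pos.le]
end

section
/- Let (X,μ,𝓡) be a discrete p.m.p. equivalence relation and 𝓕 a regular Borel family of finite subset functions with regularity constant C_reg. Then for every f ∈ L¹(X,μ) and every t > 0, μ({x : M[f|𝓕](x) > t}) ≤ C_reg‖f‖₁/t, where M[f|𝓕] = sup_r A[|f| | 𝓕_r] is the maximal function of the averaging operators A[f|𝓕_r](x) = |𝓕_r(x)|⁻¹ ∑_{y∈𝓕_r(x)} f(y). -/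
open MeasureTheory Finset
open scoped ENNReal

/-!
Vitali covering plus mass transport. Truncate to scales `r ≤ n` and replace `|f|` by `g = |f| + ε`,
so that the transported masses below are nonzero (which is what forces integrability). Give each
point `x` of the level set `E` its largest bad scale `ρ x`. A Vitali selection yields points
`S ⊆ E` with pairwise disjoint balls `F (ρ w) w` such that every `z ∈ E` meets a selected ball at
a scale `≤ ρ z`, i.e. lies in the regularity set `D w` of some `w ∈ S`. Moving mass `t` from each
point of `E` to the `w ∈ S` with `z ∈ D w`, and mass `C g` from each point to the selected ball
containing it, mass transport turns the bound `t |D w| ≤ C t |F (ρ w) w| < C ∑_{F (ρ w) w} g` at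
the selected points into `t μ E ≤ C ∫ g`.
-/

section Combinatorics

variable {ι α : Type*}

theorem Set.PairwiseDisjoint.subsingleton_setOf_mem {S : Set ι} {B : ι → Set α}
    (hS : S.PairwiseDisjoint B) (a : α) : {w ∈ S | a ∈ B w}.Subsingleton :=
  fun _ hi _ hj => hS.elim_set hi.1 hj.1 a hi.2 hj.2

theorem Set.PairwiseDisjoint.finite_setOf_inter_nonempty {S : Set ι} {B : ι → Set α}
    (hS : S.PairwiseDisjoint B) {T : Set α} (hT : T.Finite) :
    {w ∈ S | (B w ∩ T).Nonempty}.Finite := by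
  refine (hT.biUnion fun a _ => (hS.subsingleton_setOf_mem a).finite).subset ?_
  rintro w ⟨hw, a, haw, haT⟩
  exact Set.mem_biUnion haT ⟨hw, haw⟩

/-- The enlargement factor `3/2 < 2` of `Vitali.exists_disjoint_subfamily_covering_enlargement`,
applied to the radii `2 ^ ρ`, loses nothing. -/
theorem exists_pairwiseDisjoint_cover_of_rank_le (B : ι → Set α) (s : Set ι) (ρ : ι → ℕ) (n : ℕ)
    (hρ : ∀ a ∈ s, ρ a ≤ n) (hne : ∀ a ∈ s, (B a).Nonempty) :
    ∃ u ⊆ s, u.PairwiseDisjoint B ∧ ∀ a ∈ s, ∃ b ∈ u, (B a ∩ B b).Nonempty ∧ ρ a ≤ ρ b := by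
  obtain ⟨u, hus, hu, hcover⟩ := Vitali.exists_disjoint_subfamily_covering_enlargement B s
    (fun a => (2 : ℝ) ^ ρ a) (3 / 2) (by norm_num) (fun _ _ => by positivity) (2 ^ n)
    (fun a ha => pow_le_pow_right₀ one_le_two (hρ a ha)) hne
  refine ⟨u, hus, hu, fun a ha => ?_⟩
  obtain ⟨b, hb, hab, hle⟩ := hcover a ha
  refine ⟨b, hb, hab, ?_⟩
  by_contra! hlt
  have : (2 : ℝ) ^ (ρ b + 1) ≤ 2 ^ ρ a := pow_le_pow_right₀ one_le_two hlt
  have : (0 : ℝ) < 2 ^ ρ b := by positivity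
  rw [pow_succ] at *
  linarith

end Combinatorics

theorem tsum_eq_zero_of_infinite_setOf_le {β : Type*} {f : β → ℝ} {t : ℝ} (ht : 0 < t)
    (hf : {z | t ≤ f z}.Infinite) : ∑' z, f z = 0 := by
  refine tsum_eq_zero_of_not_summable fun hsum => hf ?_
  have := (hsum.tendsto_cofinite_zero.eventually (gt_mem_nhds ht))
  simpa only [Filter.eventually_cofinite, not_lt] using this

theorem mul_card_lt_sum_of_ofReal_lt_sum_div_card {α : Type*} {s : Finset α} {f : α → ℝ}
    (hf : ∀ y ∈ s, 0 ≤ f y) {t : ℝ} (ht : 0 ≤ t)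
    (h : ENNReal.ofReal t < (∑ y ∈ s, ENNReal.ofReal (f y)) / s.card) :
    t * s.card < ∑ y ∈ s, f y := by
  have hs : s.Nonempty := by
    by_contra hs
    simp [Finset.not_nonempty_iff_eq_empty.1 hs] at h
  rw [ENNReal.lt_div_iff_mul_lt (by simp [hs.ne_empty]) (by simp),
    ← ENNReal.ofReal_sum_of_nonneg hf, ← ENNReal.ofReal_natCast, ← ENNReal.ofReal_mul ht] at h
  exact (ENNReal.ofReal_lt_ofReal_iff_of_nonneg (by positivity)).1 h

section MassTransport

variable {X : Type*}

theorem measure_le_ofReal_integral_div [MeasurableSpace X] {μ : Measure X}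
    {θ : X → ℝ} (hθ : Integrable θ μ) {E : Set X} {t : ℝ} (ht : 0 < t)
    (hθE : ∀ᵐ x ∂μ, 0 ≤ θ x ∧ (x ∈ E → t ≤ θ x)) :
    μ E ≤ ENNReal.ofReal ((∫ x, θ x ∂μ) / t) := by
  have hE : E ≤ᵐ[μ] {x | ENNReal.ofReal t ≤ ENNReal.ofReal (θ x)} := by
    filter_upwards [hθE] with x hx hxE
    exact ENNReal.ofReal_le_ofReal (hx.2 hxE)
  calc μ E ≤ μ {x | ENNReal.ofReal t ≤ ENNReal.ofReal (θ x)} := measure_mono_ae hE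
    _ ≤ (∫⁻ x, ENNReal.ofReal (θ x) ∂μ) / ENNReal.ofReal t :=
      meas_ge_le_lintegral_div hθ.aemeasurable.ennreal_ofReal (by simpa using ht)
        ENNReal.ofReal_ne_top
    _ = ENNReal.ofReal ((∫ x, θ x ∂μ) / t) := by
      rw [← ofReal_integral_eq_lintegral_ofReal hθ (hθE.mono fun x hx => hx.1),
        ENNReal.ofReal_div_of_pos ht]

/-- Invariance of `μ` under `R`, in mass-transport form. -/
def MassTransport [MeasurableSpace X] (μ : Measure X) (R : X → X → Prop) : Prop :=
  ∀ G : X → X → ℝ, (∀ x y, ¬ R x y → G x y = 0) → ∫ x, ∑' y, G x y ∂μ = ∫ y, ∑' x, G x y ∂μ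

/-- Bochner integrals of non-integrable functions vanish, so a nonzero transported mass forces
the column sums to be integrable. -/
theorem MassTransport.integrable_of_integral_ne_zero [MeasurableSpace X] {μ : Measure X}
    {R : X → X → Prop} (hMT : MassTransport μ R) {G : X → X → ℝ}
    (hG : ∀ x y, ¬ R x y → G x y = 0) (h : ∫ x, ∑' y, G x y ∂μ ≠ 0) :
    Integrable (fun y => ∑' x, G x y) μ ∧ ∫ y, ∑' x, G x y ∂μ = ∫ x, ∑' y, G x y ∂μ := by
  rw [hMT G hG] at h ⊢
  exact ⟨by_contra fun hint => h (integral_undef hint), rfl⟩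

section CoverKernel

variable (S : Set X) (A : X → Set X) (c : X → ℝ)

noncomputable def coverCount (z : X) : ℕ := {w ∈ S | z ∈ A w}.ncard

open Classical in
/-- Each `z` sends its mass `c z` to every `w ∈ S` with `z ∈ A w`; the diagonal term brings the
total mass sent by `z` back to `c z`. -/
noncomputable def coverKernel (z w : X) : ℝ :=
  (if w ∈ S ∧ z ∈ A w then c z else 0) + if w = z then c z * (1 - coverCount S A z) else 0

variable {S A c}

theorem coverKernel_eq_zero_of_not_rel {R : X → X → Prop} (hrefl : ∀ x, R x x)
    (hA : ∀ w, ∀ z ∈ A w, R z w) {z w : X} (hzw : ¬ R z w) : coverKernel S A c z w = 0 := by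
  have hne : w ≠ z := by rintro rfl; exact hzw (hrefl w)
  have hzA : z ∉ A w := fun h => hzw (hA w z h)
  simp [coverKernel, hne, hzA]

theorem tsum_coverKernel_row {z : X} (hz : {w ∈ S | z ∈ A w}.Finite) :
    ∑' w, coverKernel S A c z w = c z := by
  classical
  have hcover : ∑' w, (if w ∈ S ∧ z ∈ A w then c z else 0) = coverCount S A z * c z := by
    rw [tsum_eq_sum (s := hz.toFinset) (by simp +contextual), ← Finset.sum_filter,
      Finset.sum_const, nsmul_eq_mul, coverCount, Set.ncard_eq_toFinset_card _ hz]
    congr 3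
    ext w; simp
  unfold coverKernel
  rw [Summable.tsum_add, hcover, tsum_ite_eq]
  · ring
  · exact summable_of_ne_finset_zero (s := hz.toFinset) (by simp +contextual)
  · exact summable_of_ne_finset_zero (s := {z}) (by simp +contextual)

theorem tsum_coverKernel_col_of_notMem {w : X} (hw : w ∉ S) :
    ∑' z, coverKernel S A c z w = c w * (1 - coverCount S A w) := by
  rw [tsum_eq_single w fun z hz => by simp [coverKernel, hw, Ne.symm hz]]
  simp [coverKernel, hw]

theorem tsum_coverKernel_col_of_finite {w : X} (hw : w ∈ S) (hA : (A w).Finite) :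
    ∑' z, coverKernel S A c z w = ∑ z ∈ hA.toFinset, c z + c w * (1 - coverCount S A w) := by
  classical
  unfold coverKernel
  rw [Summable.tsum_add, tsum_eq_sum (s := hA.toFinset) (by simp +contextual),
    tsum_eq_single w (by simp +contextual [eq_comm])]
  · simp +contextual [hw, Finset.sum_ite_of_true]
  · exact summable_of_ne_finset_zero (s := hA.toFinset) (by simp +contextual)
  · exact summable_of_ne_finset_zero (s := {w}) (by simp +contextual [eq_comm])

theorem tsum_coverKernel_col_of_infinite {w : X} (hw : w ∈ S) (hA : (A w).Infinite) {t : ℝ}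
    (ht : 0 < t) (hc : ∀ z, t ≤ c z) : ∑' z, coverKernel S A c z w = 0 := by
  refine tsum_eq_zero_of_infinite_setOf_le ht ((hA.sdiff (Set.finite_singleton w)).mono ?_)
  rintro z ⟨hzA, hzw⟩
  simp_all [coverKernel, Ne.symm hzw]

theorem one_le_coverCount {z : X} (hz : {w ∈ S | z ∈ A w}.Finite) (hcov : ∃ w ∈ S, z ∈ A w) :
    1 ≤ coverCount S A z :=
  (Set.ncard_pos hz).2 hcov

theorem coverCount_le_one (hS : S.PairwiseDisjoint A) (z : X) : coverCount S A z ≤ 1 :=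
  have h := hS.subsingleton_setOf_mem z
  (Set.ncard_le_one_iff h.finite).2 fun hw hv => h hw hv

theorem tsum_coverKernel_col_nonneg (hS : S.PairwiseDisjoint A) (hc : ∀ z, 0 ≤ c z)
    {w : X} (hA : (A w).Finite) : 0 ≤ ∑' z, coverKernel S A c z w := by
  have hN : (coverCount S A w : ℝ) ≤ 1 := by exact_mod_cast coverCount_le_one hS w
  have hdiag : 0 ≤ c w * (1 - coverCount S A w) := mul_nonneg (hc w) (by linarith)
  by_cases hw : w ∈ S
  · rw [tsum_coverKernel_col_of_finite hw hA]
    exact add_nonneg (Finset.sum_nonneg fun z _ => hc z) hdiag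
  · rwa [tsum_coverKernel_col_of_notMem hw]

theorem sum_le_tsum_coverKernel_col (hS : S.PairwiseDisjoint A) (hc : ∀ z, 0 ≤ c z)
    {w : X} (hw : w ∈ S) (hA : (A w).Finite) :
    ∑ z ∈ hA.toFinset, c z ≤ ∑' z, coverKernel S A c z w := by
  have hN : (coverCount S A w : ℝ) ≤ 1 := by exact_mod_cast coverCount_le_one hS w
  rw [tsum_coverKernel_col_of_finite hw hA]
  nlinarith [hc w]

/-- For infinite `A w` both sides are junk `0`: the column is not summable and `ncard` vanishes. -/
theorem tsum_coverKernel_const_col_le {w : X} (hw : w ∈ S) (hN : 1 ≤ coverCount S A w) {t : ℝ}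
    (ht : 0 < t) : ∑' z, coverKernel S A (fun _ => t) z w ≤ t * (A w).ncard := by
  rcases (A w).finite_or_infinite with hA | hA
  · have hN' : (1 : ℝ) ≤ coverCount S A w := by exact_mod_cast hN
    rw [tsum_coverKernel_col_of_finite hw hA, Finset.sum_const, nsmul_eq_mul,
      Set.ncard_eq_toFinset_card _ hA]
    nlinarith
  · rw [tsum_coverKernel_col_of_infinite hw hA ht fun _ => le_rfl, hA.ncard]
    simp

end CoverKernel

/-- `θ = (columns of G) - (columns of K) + t` is integrable with integral `C ∫ g` by mass
transport, and dominates `t` on `E`: at `w ∈ S` the regularity bound compares the two columns,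
and off `S` the column of `K` is `t (1 - #{w' ∈ S | w ∈ D w'})`. -/
theorem measure_le_of_pairwiseDisjoint_cover [MeasurableSpace X] {μ : Measure X}
    [IsProbabilityMeasure μ] {R : X → X → Prop} (hMT : MassTransport μ R) (hR : Equivalence R)
    {g : X → ℝ} (hg0 : ∀ x, 0 ≤ g x) (hgpos : 0 < ∫ x, g x ∂μ)
    {t C : ℝ} (ht : 0 < t) (hC : 0 < C) {E S : Set X} (hSE : S ⊆ E) (B : X → Finset X)
    (D : X → Set X) (hBR : ∀ w, ∀ z ∈ B w, R w z) (hDR : ∀ w, ∀ z ∈ D w, R z w)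
    (hS : S.PairwiseDisjoint fun w => (B w : Set X)) (hcover : ∀ z ∈ E, ∃ w ∈ S, z ∈ D w)
    (hDfin : ∀ z, {w ∈ S | z ∈ D w}.Finite)
    (hbound : ∀ᵐ w ∂μ, w ∈ S → t * (D w).ncard ≤ C * ∑ y ∈ B w, g y) :
    μ E ≤ ENNReal.ofReal (C * (∫ x, g x ∂μ) / t) := by
  let c : X → ℝ := fun z => C * g z
  have hc : ∀ z, 0 ≤ c z := fun z => mul_nonneg hC.le (hg0 z)
  let G := coverKernel S (fun w => (B w : Set X)) c
  let K := coverKernel S D fun _ => t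
  have hGR : ∀ x y, ¬ R x y → G x y = 0 := fun _ _ =>
    coverKernel_eq_zero_of_not_rel hR.refl fun w z hz => hR.symm (hBR w z hz)
  have hKR : ∀ x y, ¬ R x y → K x y = 0 := fun _ _ => coverKernel_eq_zero_of_not_rel hR.refl hDR
  have hGrow : ∫ x, ∑' y, G x y ∂μ = C * ∫ x, g x ∂μ := by
    simp only [G, tsum_coverKernel_row (hS.subsingleton_setOf_mem _).finite, c,
      integral_const_mul]
  have hKrow : ∫ x, ∑' y, K x y ∂μ = t := by
    simp [K, tsum_coverKernel_row (hDfin _)]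
  obtain ⟨hGint, hGcol⟩ :=
    hMT.integrable_of_integral_ne_zero hGR (hGrow ▸ (mul_pos hC hgpos).ne')
  obtain ⟨hKint, hKcol⟩ := hMT.integrable_of_integral_ne_zero hKR (hKrow ▸ ht.ne')
  have hGK : Integrable (fun w => ∑' z, G z w - ∑' z, K z w) μ := hGint.sub hKint
  have hθ : Integrable (fun w => ∑' z, G z w - ∑' z, K z w + t) μ :=
    hGK.add (integrable_const t)
  have hθint : ∫ w, (∑' z, G z w - ∑' z, K z w + t) ∂μ = C * ∫ x, g x ∂μ := by
    rw [integral_add hGK (integrable_const t), integral_sub hGint hKint, hGcol, hKcol, hGrow,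
      hKrow]
    simp
  refine (measure_le_ofReal_integral_div hθ ht ?_).trans_eq (by rw [hθint])
  filter_upwards [hbound] with w hw
  have hG0 : 0 ≤ ∑' z, G z w := tsum_coverKernel_col_nonneg hS hc (B w).finite_toSet
  by_cases hwS : w ∈ S
  · have hGS : C * ∑ y ∈ B w, g y ≤ ∑' z, G z w := by
      have := sum_le_tsum_coverKernel_col hS hc hwS (B w).finite_toSet
      rwa [Finset.finite_toSet_toFinset, ← Finset.mul_sum] at this
    have hKS : ∑' z, K z w ≤ t * (D w).ncard := tsum_coverKernel_const_col_le hwS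
      (one_le_coverCount (hDfin w) (hcover w (hSE hwS))) ht
    have := hw hwS
    constructor <;> intros <;> linarith
  · have hKS : ∑' z, K z w = t * (1 - coverCount S D w) := tsum_coverKernel_col_of_notMem hwS
    have hN : (0 : ℝ) ≤ coverCount S D w := Nat.cast_nonneg _
    refine ⟨by nlinarith, fun hwE => ?_⟩
    have : (1 : ℝ) ≤ coverCount S D w := by
      exact_mod_cast one_le_coverCount (hDfin w) (hcover w hwE)
    nlinarith

theorem measure_setOf_exists_le_lt_sum_le [MeasurableSpace X] [DecidableEq X] {μ : Measure X}
    [IsProbabilityMeasure μ] {R : X → X → Prop} (hMT : MassTransport μ R) (hR : Equivalence R)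
    (F : ℕ → X → Finset X) (hFR : ∀ r x, ∀ y ∈ F r x, R x y) {C : ℝ} (hC : 0 < C)
    (hreg : ∀ᵐ x ∂μ, ∀ r : ℕ,
      (({x' | ∃ s ≤ r, ((F s x') ∩ (F r x)).Nonempty}).ncard : ℝ) ≤ C * (F r x).card)
    {g : X → ℝ} (hg0 : ∀ x, 0 ≤ g x) (hgpos : 0 < ∫ x, g x ∂μ) {t : ℝ} (ht : 0 < t) (n : ℕ) :
    μ {x | ∃ r ≤ n, t * (F r x).card < ∑ y ∈ F r x, g y} ≤
      ENNReal.ofReal (C * (∫ x, g x ∂μ) / t) := by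
  classical
  set E := {x | ∃ r ≤ n, t * (F r x).card < ∑ y ∈ F r x, g y}
  let P x r := t * (F r x).card < ∑ y ∈ F r x, g y
  let ρ x := Nat.findGreatest (P x) n
  have hρ : ∀ x ∈ E, P x (ρ x) := fun x ⟨r, hr, h⟩ => Nat.findGreatest_spec (P := P x) hr h
  have hρn : ∀ x, ρ x ≤ n := fun x => Nat.findGreatest_le n
  have hne : ∀ x ∈ E, (F (ρ x) x : Set X).Nonempty := by
    intro x hx
    rw [Finset.coe_nonempty, Finset.nonempty_iff_ne_empty]
    intro h
    simpa [P, h] using hρ x hx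
  obtain ⟨S, hSE, hS, hcover⟩ := exists_pairwiseDisjoint_cover_of_rank_le
    (fun x => (F (ρ x) x : Set X)) E ρ n (fun x _ => hρn x) hne
  let D w := {x' | ∃ s ≤ ρ w, (F s x' ∩ F (ρ w) w).Nonempty}
  refine measure_le_of_pairwiseDisjoint_cover hMT hR hg0 hgpos ht hC hSE (fun w => F (ρ w) w) D
    (fun w => hFR _ w) ?_ hS ?_ ?_ ?_
  · rintro w z ⟨s, -, y, hy⟩
    rw [Finset.mem_inter] at hy
    exact hR.trans (hFR _ _ _ hy.1) (hR.symm (hFR _ _ _ hy.2))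
  · intro z hz
    obtain ⟨w, hwS, hzw, hle⟩ := hcover z hz
    exact ⟨w, hwS, ρ z, hle, by simpa only [← Finset.coe_inter, Finset.coe_nonempty] using hzw⟩
  · intro z
    refine (hS.finite_setOf_inter_nonempty
      ((Finset.range (n + 1)).biUnion (F · z)).finite_toSet).subset ?_
    rintro w ⟨hwS, s, hs, y, hy⟩
    rw [Finset.mem_inter] at hy
    exact ⟨hwS, y, hy.2, by simpa using ⟨s, by have := hρn w; omega, hy.1⟩⟩
  · filter_upwards [hreg] with w hw hwS
    have := mul_le_mul_of_nonneg_left (hw (ρ w)) ht.le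
    nlinarith [hρ w (hSE hwS)]

theorem measure_setOf_exists_lt_sum_le [MeasurableSpace X] [DecidableEq X] {μ : Measure X}
    [IsProbabilityMeasure μ] {R : X → X → Prop} (hMT : MassTransport μ R) (hR : Equivalence R)
    (F : ℕ → X → Finset X) (hFR : ∀ r x, ∀ y ∈ F r x, R x y) {C : ℝ} (hC : 0 < C)
    (hreg : ∀ᵐ x ∂μ, ∀ r : ℕ,
      (({x' | ∃ s ≤ r, ((F s x') ∩ (F r x)).Nonempty}).ncard : ℝ) ≤ C * (F r x).card)
    {g : X → ℝ} (hg0 : ∀ x, 0 ≤ g x) (hgpos : 0 < ∫ x, g x ∂μ) {t : ℝ} (ht : 0 < t) :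
    μ {x | ∃ r, t * (F r x).card < ∑ y ∈ F r x, g y} ≤
      ENNReal.ofReal (C * (∫ x, g x ∂μ) / t) := by
  let E n := {x | ∃ r ≤ n, t * (F r x).card < ∑ y ∈ F r x, g y}
  have hE : {x | ∃ r, t * (F r x).card < ∑ y ∈ F r x, g y} = ⋃ n, E n := by
    ext x
    simpa [E] using ⟨fun ⟨r, hr⟩ => ⟨r, r, le_rfl, hr⟩, fun ⟨_, r, _, hr⟩ => ⟨r, hr⟩⟩
  have hEmono : Monotone E := fun m n hmn x ⟨r, hr, h⟩ => ⟨r, hr.trans hmn, h⟩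
  rw [hE, hEmono.measure_iUnion]
  exact iSup_le fun n => measure_setOf_exists_le_lt_sum_le hMT hR F hFR hC hreg hg0 hgpos ht n

end MassTransport

theorem weak_11_regular_general {X : Type*} [MeasurableSpace X] [DecidableEq X]
    (μ : Measure X) [IsProbabilityMeasure μ]
    (R : X → X → Prop) (hR : Equivalence R)
    (F : ℕ → X → Finset X) (hFR : ∀ r x, ∀ y ∈ F r x, R x y)
    (hMT : ∀ G : X → X → ℝ, (∀ x y, ¬ R x y → G x y = 0) →
      ∫ x, ∑' y, G x y ∂μ = ∫ y, ∑' x, G x y ∂μ)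
    (Creg : ℝ) (hCreg : 0 < Creg)
    (hreg : ∀ᵐ x ∂μ, ∀ r : ℕ,
      (({x' | ∃ t ≤ r, ((F t x') ∩ (F r x)).Nonempty}).ncard : ℝ) ≤ Creg * (F r x).card)
    (f : X → ℝ) (hfint : Integrable f μ) (t : ℝ) (ht : 0 < t) :
    μ {x | ENNReal.ofReal t <
        ⨆ r : ℕ, (∑ y ∈ F r x, ENNReal.ofReal |f y|) / ((F r x).card : ℝ≥0∞)} ≤
      ENNReal.ofReal (Creg * (∫ x, |f x| ∂μ) / t) := by
  set I := ∫ x, |f x| ∂μ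
  have hI : 0 ≤ I := integral_nonneg fun x => abs_nonneg _
  have hbound : ∀ ε : ℝ, 0 < ε → μ {x | ENNReal.ofReal t <
      ⨆ r : ℕ, (∑ y ∈ F r x, ENNReal.ofReal |f y|) / ((F r x).card : ℝ≥0∞)} ≤
      ENNReal.ofReal (Creg * (I + ε) / t) := by
    intro ε hε
    have hgI : ∫ x, (|f x| + ε) ∂μ = I + ε := by
      rw [integral_add hfint.abs (integrable_const ε)]
      simp [I]
    refine (measure_mono fun x hx => ?_).trans (hgI ▸ measure_setOf_exists_lt_sum_le hMT hR F hFR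
      hCreg hreg (fun y => by positivity) (by rw [hgI]; linarith) ht)
    obtain ⟨r, hr⟩ := lt_iSup_iff.1 (show ENNReal.ofReal t < _ from hx)
    refine ⟨r, ?_⟩
    calc t * (F r x).card < ∑ y ∈ F r x, |f y| :=
          mul_card_lt_sum_of_ofReal_lt_sum_div_card (fun y _ => abs_nonneg _) ht.le hr
      _ ≤ ∑ y ∈ F r x, (|f y| + ε) := Finset.sum_le_sum fun y _ => by linarith
  refine ENNReal.le_of_forall_pos_le_add fun ε hε _ => ?_
  refine (hbound (ε * t / Creg) (by positivity)).trans_eq ?_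
  rw [← ENNReal.ofReal_coe_nnreal, ← ENNReal.ofReal_add (by positivity) ε.coe_nonneg]
  congr 1
  field_simp

/-- Lemma 2.8 (Bowen–Nevo): the weak-type (1,1) maximal inequality for a regular family of
subset functions on a p.m.p. equivalence relation (p.m.p. encoded by the mass-transport
principle `hMT`). -/
theorem weak_11_regular {X : Type*} [MeasurableSpace X] [DecidableEq X]
    (μ : Measure X) [IsProbabilityMeasure μ]
    (R : X → X → Prop) (hR : Equivalence R) (hcount : ∀ x, {y | R x y}.Countable)
    (F : ℕ → X → Finset X) (hFR : ∀ r x, ∀ y ∈ F r x, R x y)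
    (hBorel : MeasurableSet {p : (X × X) × ℕ | p.1.2 ∈ F p.2 p.1.1})
    (hMT : ∀ G : X → X → ℝ, (∀ x y, ¬ R x y → G x y = 0) →
      ∫ x, ∑' y, G x y ∂μ = ∫ y, ∑' x, G x y ∂μ)
    (Creg : ℝ) (hCreg : 0 < Creg)
    (hreg : ∀ᵐ x ∂μ, ∀ r : ℕ,
      (({x' | ∃ t ≤ r, ((F t x') ∩ (F r x)).Nonempty}).ncard : ℝ) ≤ Creg * (F r x).card)
    (f : X → ℝ) (hfint : Integrable f μ) (t : ℝ) (ht : 0 < t) :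
    μ {x | ENNReal.ofReal t <
        ⨆ r : ℕ, (∑ y ∈ F r x, ENNReal.ofReal |f y|) / ((F r x).card : ℝ≥0∞)} ≤
      ENNReal.ofReal (Creg * (∫ x, |f x| ∂μ) / t) :=
  weak_11_regular_general μ R hR F hFR hMT Creg hCreg hreg f hfint t ht
end

section
/- Let π : (X̃,μ̃,𝓡̃) → (X,μ,𝓡) be a class-bijective extension of discrete p.m.p. equivalence relations, and let 𝓕 = {𝓕_r} be a Borel family of finite subset functions for 𝓡. Define the lifted family 𝓕̃_r(x̃) = π⁻¹(𝓕_r(π(x̃))) ∩ [x̃]. Then for each property P ∈ {asymptotically invariant, uniform, regular, tempered}: if 𝓕 has property P then 𝓕̃ has property P (with the same constants). -/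
open MeasureTheory Filter Finset

section Props

variable {Y : Type*} [MeasurableSpace Y] [DecidableEq Y]

/-- A family of subset functions is asymptotically invariant (Følner). -/
def AsympInvariant (μ : Measure Y) (R : Y → Y → Prop) (F : ℕ → Y → Finset Y) : Prop :=
  (∀ᵐ x ∂μ, ∀ r, 1 ≤ (F r x).card) ∧
  ∃ Ψ : Set (Equiv.Perm Y), Ψ.Countable ∧ (∀ ψ ∈ Ψ, ∀ x, R x (ψ x)) ∧
    (∀ᵐ x ∂μ, ∀ y, R x y → ∃ ψ ∈ Subgroup.closure Ψ, ψ x = y) ∧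
    ∀ ψ ∈ Ψ, ∀ᵐ x ∂μ, Tendsto
      (fun r => ((symmDiff (F r x) ((F r x).image ψ)).card : ℝ) / (F r x).card)
      atTop (nhds 0)

/-- A family of subset functions is uniform with constants `C_u, a_r, b_r`. -/
def UniformFam (μ : Measure Y) (F : ℕ → Y → Finset Y) : Prop :=
  ∃ (Cu : ℝ) (a b : ℕ → ℝ), 0 < Cu ∧ (∀ r, 0 < a r ∧ b r ≤ Cu * a r) ∧
    ∀ᵐ x ∂μ, ∀ r,
      (a r ≤ (F r x).card ∧ ((F r x).card : ℝ) ≤ b r) ∧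
      (a r ≤ ({y | x ∈ F r y}.ncard : ℝ) ∧ ({y | x ∈ F r y}.ncard : ℝ) ≤ b r)

/-- A family of subset functions is regular with constant `C_reg`. -/
def RegularFam (μ : Measure Y) (F : ℕ → Y → Finset Y) : Prop :=
  ∃ Creg : ℝ, 0 < Creg ∧ ∀ᵐ x ∂μ, ∀ r : ℕ,
    (({x' | ∃ t ≤ r, ((F t x') ∩ (F r x)).Nonempty}).ncard : ℝ) ≤ Creg * (F r x).card

/-- A family of subset functions is tempered with constant `C_t`. -/
def TemperedFam (μ : Measure Y) (F : ℕ → Y → Finset Y) : Prop :=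
  ∃ Ct : ℝ, 0 < Ct ∧ ∀ᵐ x ∂μ, ∀ r : ℕ,
    (({x' | ∃ t < r, ((F t x') ∩ (F r x)).Nonempty}).ncard : ℝ) ≤ Ct * (F r x).card

end Props


/-! At a point `x̃` where `π` maps the class `[x̃]` bijectively onto `[π x̃]` (almost every point,
and a condition that is invariant along `𝓡̃`-classes), each set attached to the lifted family inside
`[x̃]` (the sets `𝓕̃_r(x̃)`, `{ỹ | x̃ ∈ 𝓕̃_r(ỹ)}`, the unions in the regularity and temperedness
conditions, the Følner symmetric differences) is the preimage in `[x̃]` of the corresponding set for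
`𝓕` at `π x̃`, hence has the same cardinality. For asymptotic invariance, a class-preserving
permutation `ψ` lifts to the permutation moving each such point `x̃` to the unique point of `[x̃]`
over `ψ (π x̃)` (and fixing all other points); lifting is a group homomorphism, so the lifts of a
generating set generate lifts of everything the set generates. -/

theorem Set.BijOn.ncard_inter_preimage {α β : Type*} {f : α → β} {s : Set α} {t u : Set β}
    (h : Set.BijOn f s t) (hu : u ⊆ t) : (s ∩ f ⁻¹' u).ncard = u.ncard := by
  rw [← (h.injOn.mono Set.inter_subset_left).ncard_image, Set.image_inter_preimage, h.image_eq,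
    Set.inter_eq_right.2 hu]

theorem Equivalence.setOf_eq_of_rel {α : Type*} {r : α → α → Prop} (h : Equivalence r) {x y : α}
    (hxy : r x y) : {z | r x z} = {z | r y z} :=
  Set.ext fun _ => ⟨h.trans (h.symm hxy), h.trans hxy⟩

section ClassBijective

variable {X Xt : Type*} {R : X → X → Prop} {Rt : Xt → Xt → Prop} {π : Xt → X} {x : Xt}

abbrev IsClassBijectiveAt (R : X → X → Prop) (Rt : Xt → Xt → Prop) (π : Xt → X) (x : Xt) : Prop :=
  Set.BijOn π {y | Rt x y} {w | R (π x) w}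

theorem bijOn_class_of_rel (hR : Equivalence R) (hRt : Equivalence Rt)
    (hx : IsClassBijectiveAt R Rt π x) {y : Xt} (hxy : Rt x y)
    (hπxy : R (π x) (π y)) : IsClassBijectiveAt R Rt π y := by
  rwa [IsClassBijectiveAt, ← hRt.setOf_eq_of_rel hxy, ← hR.setOf_eq_of_rel hπxy]

theorem ncard_eq_of_forall_mem_iff (hx : IsClassBijectiveAt R Rt π x)
    {S : Set Xt} {T : Set X} (hT : T ⊆ {w | R (π x) w})
    (hS : ∀ y, y ∈ S ↔ Rt x y ∧ π y ∈ T) : S.ncard = T.ncard := by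
  rw [show S = {y | Rt x y} ∩ π ⁻¹' T from Set.ext hS, hx.ncard_inter_preimage hT]

theorem card_eq_of_forall_mem_iff (hx : IsClassBijectiveAt R Rt π x)
    {A : Finset Xt} {T : Finset X} (hT : ↑T ⊆ {w | R (π x) w})
    (hA : ∀ y, y ∈ A ↔ Rt x y ∧ π y ∈ T) : A.card = T.card := by
  simpa using ncard_eq_of_forall_mem_iff hx hT (S := ↑A) hA

open Classical in
noncomputable def liftFun (R : X → X → Prop) (Rt : Xt → Xt → Prop) (π : Xt → X) (ψ : X → X)
    (x : Xt) : Xt :=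
  if IsClassBijectiveAt R Rt π x then
    have : Nonempty Xt := ⟨x⟩
    Function.invFunOn π {y | Rt x y} (ψ (π x))
  else x

theorem liftFun_eq_iff (hx : IsClassBijectiveAt R Rt π x) {ψ : X → X}
    (hψ : R (π x) (ψ (π x))) {y : Xt} :
    liftFun R Rt π ψ x = y ↔ Rt x y ∧ π y = ψ (π x) := by
  have : Nonempty Xt := ⟨x⟩
  have hlift := hx.surjOn hψ
  rw [liftFun, if_pos hx]
  refine ⟨?_, fun ⟨hy, hπy⟩ => hx.injOn (Function.invFunOn_mem hlift) hy ?_⟩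
  · rintro rfl
    exact ⟨Function.invFunOn_mem hlift, Function.invFunOn_eq hlift⟩
  · rw [Function.invFunOn_eq hlift, hπy]

theorem liftFun_of_not_bijOn (hx : ¬IsClassBijectiveAt R Rt π x) (ψ : X → X) :
    liftFun R Rt π ψ x = x :=
  if_neg hx

def classPreservingPerms (hR : Equivalence R) : Subgroup (Equiv.Perm X) where
  carrier := {ψ | ∀ a, R a (ψ a)}
  mul_mem' {ψ φ} hψ hφ a := hR.trans (hφ a) (hψ (φ a))
  one_mem' := hR.refl
  inv_mem' {ψ} hψ a := hR.symm (by simpa using hψ (ψ⁻¹ a))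

noncomputable def liftMonoidHom (hR : Equivalence R) (hRt : Equivalence Rt)
    (hπR : ∀ x y, Rt x y → R (π x) (π y)) : classPreservingPerms hR →* Function.End Xt where
  toFun ψ := liftFun R Rt π ψ
  map_one' := by
    funext x
    by_cases hx : IsClassBijectiveAt R Rt π x
    · exact (liftFun_eq_iff hx (hR.refl _)).2 ⟨hRt.refl x, rfl⟩
    · exact liftFun_of_not_bijOn hx _
  map_mul' ψ φ := by
    funext x
    change liftFun R Rt π (ψ * φ : Equiv.Perm X) x = liftFun R Rt π ψ (liftFun R Rt π φ x)
    by_cases hx : IsClassBijectiveAt R Rt π x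
    · obtain ⟨hxy, hπy⟩ := (liftFun_eq_iff hx (φ.2 (π x))).1 rfl
      set y := liftFun R Rt π φ x
      have hy := bijOn_class_of_rel hR hRt hx hxy (hπR x y hxy)
      obtain ⟨hyz, hπz⟩ := (liftFun_eq_iff hy (ψ.2 (π y))).1 rfl
      refine (liftFun_eq_iff hx ((ψ * φ).2 (π x))).2 ⟨hRt.trans hxy hyz, ?_⟩
      rw [hπz, hπy]
      rfl
    · rw [liftFun_of_not_bijOn hx, liftFun_of_not_bijOn hx, liftFun_of_not_bijOn hx]

noncomputable def liftPermHom (hR : Equivalence R) (hRt : Equivalence Rt)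
    (hπR : ∀ x y, Rt x y → R (π x) (π y)) : classPreservingPerms hR →* Equiv.Perm Xt :=
  (liftMonoidHom hR hRt hπR).toHomPerm

theorem liftPermHom_apply (hR : Equivalence R) (hRt : Equivalence Rt)
    (hπR : ∀ x y, Rt x y → R (π x) (π y)) (ψ : classPreservingPerms hR) (x : Xt) :
    liftPermHom hR hRt hπR ψ x = liftFun R Rt π ψ x :=
  rfl

theorem rel_liftPermHom_apply (hR : Equivalence R) (hRt : Equivalence Rt)
    (hπR : ∀ x y, Rt x y → R (π x) (π y)) (ψ : classPreservingPerms hR) (x : Xt) :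
    Rt x (liftPermHom hR hRt hπR ψ x) := by
  rw [liftPermHom_apply]
  by_cases hx : IsClassBijectiveAt R Rt π x
  · exact ((liftFun_eq_iff hx (ψ.2 (π x))).1 rfl).1
  · rw [liftFun_of_not_bijOn hx]
    exact hRt.refl x

theorem exists_mem_closure_liftPermHom (hR : Equivalence R) (hRt : Equivalence Rt)
    (hπR : ∀ x y, Rt x y → R (π x) (π y)) {Ψ : Set (Equiv.Perm X)}
    (hΨ : Ψ ⊆ classPreservingPerms hR) {σ : Equiv.Perm X} (hσ : σ ∈ Subgroup.closure Ψ) :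
    ∃ τ ∈ Subgroup.closure (liftPermHom hR hRt hπR '' (Subtype.val ⁻¹' Ψ)),
      ∀ x, τ x = liftFun R Rt π σ x := by
  have hmap : (Subgroup.closure (Subtype.val ⁻¹' Ψ)).map (classPreservingPerms hR).subtype =
      Subgroup.closure Ψ := by
    rw [MonoidHom.map_closure]
    congr
    exact (Subtype.image_preimage_coe _ _).trans (Set.inter_eq_right.2 hΨ)
  rw [← hmap] at hσ
  obtain ⟨σ', hσ', rfl⟩ := hσ
  refine ⟨_, ?_, liftPermHom_apply hR hRt hπR σ'⟩
  rw [← MonoidHom.map_closure]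
  exact Subgroup.mem_map_of_mem _ hσ'

end ClassBijective

section Counting

variable {X Xt : Type*} {R : X → X → Prop} {Rt : Xt → Xt → Prop} {π : Xt → X}
  {F : ℕ → X → Finset X} {Ft : ℕ → Xt → Finset Xt} {x : Xt}

theorem card_lift_eq (hFR : ∀ r x, ∀ y ∈ F r x, R x y)
    (hFt : ∀ r x y, y ∈ Ft r x ↔ (Rt x y ∧ π y ∈ F r (π x)))
    (hx : IsClassBijectiveAt R Rt π x) (r : ℕ) :
    (Ft r x).card = (F r (π x)).card :=
  card_eq_of_forall_mem_iff hx (hFR r (π x)) (hFt r x)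

theorem ncard_setOf_mem_lift_eq (hR : Equivalence R) (hRt : Equivalence Rt)
    (hFR : ∀ r x, ∀ y ∈ F r x, R x y)
    (hFt : ∀ r x y, y ∈ Ft r x ↔ (Rt x y ∧ π y ∈ F r (π x)))
    (hx : IsClassBijectiveAt R Rt π x) (r : ℕ) :
    {y | x ∈ Ft r y}.ncard = {w | π x ∈ F r w}.ncard :=
  ncard_eq_of_forall_mem_iff hx (fun w hw => hR.symm (hFR r w (π x) hw)) fun y =>
    (hFt r y x).trans (and_congr_left' ⟨hRt.symm, hRt.symm⟩)

theorem ncard_setOf_lift_inter_nonempty_eq [DecidableEq X] [DecidableEq Xt]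
    (hR : Equivalence R) (hRt : Equivalence Rt) (hFR : ∀ r x, ∀ y ∈ F r x, R x y)
    (hFt : ∀ r x y, y ∈ Ft r x ↔ (Rt x y ∧ π y ∈ F r (π x)))
    (hx : IsClassBijectiveAt R Rt π x) (Q : ℕ → Prop) (r : ℕ) :
    {x' | ∃ t, Q t ∧ (Ft t x' ∩ Ft r x).Nonempty}.ncard =
      {x' | ∃ t, Q t ∧ (F t x' ∩ F r (π x)).Nonempty}.ncard := by
  refine ncard_eq_of_forall_mem_iff hx ?_ fun y => ⟨?_, ?_⟩
  · rintro w ⟨t, -, w', hw'⟩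
    rw [Finset.mem_inter] at hw'
    exact hR.trans (hFR r (π x) w' hw'.2) (hR.symm (hFR t w w' hw'.1))
  · rintro ⟨t, hQ, z, hz⟩
    rw [Finset.mem_inter, hFt, hFt] at hz
    exact ⟨hRt.trans hz.2.1 (hRt.symm hz.1.1), t, hQ, π z, Finset.mem_inter.2 ⟨hz.1.2, hz.2.2⟩⟩
  · rintro ⟨hxy, t, hQ, w, hw⟩
    rw [Finset.mem_inter] at hw
    obtain ⟨z, hxz, rfl⟩ := hx.surjOn (hFR r (π x) _ hw.2)
    refine ⟨t, hQ, z, Finset.mem_inter.2 ⟨(hFt t y z).2 ⟨?_, hw.1⟩, (hFt r x z).2 ⟨hxz, hw.2⟩⟩⟩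
    exact hRt.trans (hRt.symm hxy) hxz

theorem card_symmDiff_image_lift_eq [DecidableEq X] [DecidableEq Xt]
    (hR : Equivalence R) (hRt : Equivalence Rt)
    (hπR : ∀ x y, Rt x y → R (π x) (π y)) (hFR : ∀ r x, ∀ y ∈ F r x, R x y)
    (hFt : ∀ r x y, y ∈ Ft r x ↔ (Rt x y ∧ π y ∈ F r (π x)))
    (hx : IsClassBijectiveAt R Rt π x) (ψ : classPreservingPerms hR) (r : ℕ) :
    (symmDiff (Ft r x) ((Ft r x).image (liftPermHom hR hRt hπR ψ))).card =
      (symmDiff (F r (π x)) ((F r (π x)).image (ψ : Equiv.Perm X))).card := by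
  have hlift : ∀ a, Rt x a → Rt x (liftPermHom hR hRt hπR ψ a) ∧
      π (liftPermHom hR hRt hπR ψ a) = (ψ : Equiv.Perm X) (π a) := fun a hxa =>
    have ha := bijOn_class_of_rel hR hRt hx hxa (hπR x a hxa)
    have := (liftFun_eq_iff ha (ψ.2 (π a))).1 rfl
    ⟨hRt.trans hxa this.1, this.2⟩
  have himage : ∀ y, y ∈ (Ft r x).image (liftPermHom hR hRt hπR ψ) ↔
      Rt x y ∧ π y ∈ (F r (π x)).image (ψ : Equiv.Perm X) := by
    intro y
    simp only [Finset.mem_image, hFt]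
    constructor
    · rintro ⟨a, ⟨hxa, ha⟩, rfl⟩
      exact ⟨(hlift a hxa).1, π a, ha, (hlift a hxa).2.symm⟩
    · rintro ⟨hxy, w, hw, hπy⟩
      obtain ⟨a, hxa, rfl⟩ := hx.surjOn (hFR r (π x) w hw)
      exact ⟨a, ⟨hxa, hw⟩, hx.injOn (hlift a hxa).1 hxy ((hlift a hxa).2.trans hπy)⟩
  refine card_eq_of_forall_mem_iff hx ?_ fun y => ?_
  · intro w hw
    rcases Finset.mem_symmDiff.1 hw with ⟨hw, -⟩ | ⟨hw, -⟩
    · exact hFR r (π x) w hw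
    · obtain ⟨v, hv, rfl⟩ := Finset.mem_image.1 hw
      exact hR.trans (hFR r (π x) v hv) (ψ.2 v)
  · simp only [Finset.mem_symmDiff, himage, hFt]
    tauto

end Counting

section Lift

variable {X Xt : Type*} [MeasurableSpace X] [MeasurableSpace Xt]
  {μ : Measure X} {μt : Measure Xt} {R : X → X → Prop} {Rt : Xt → Xt → Prop} {π : Xt → X}
  {F : ℕ → X → Finset X} {Ft : ℕ → Xt → Finset Xt}

theorem AsympInvariant.lift [DecidableEq X] [DecidableEq Xt]
    (hR : Equivalence R) (hRt : Equivalence Rt)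
    (hπR : ∀ x y, Rt x y → R (π x) (π y)) (hπ : Measure.QuasiMeasurePreserving π μt μ)
    (hbij : ∀ᵐ x ∂μt, IsClassBijectiveAt R Rt π x)
    (hFR : ∀ r x, ∀ y ∈ F r x, R x y)
    (hFt : ∀ r x y, y ∈ Ft r x ↔ (Rt x y ∧ π y ∈ F r (π x)))
    (h : AsympInvariant μ R F) : AsympInvariant μt Rt Ft := by
  obtain ⟨hne, Ψ, hΨc, hΨR, hΨgen, hΨfol⟩ := h
  have hΨ : Ψ ⊆ classPreservingPerms hR := hΨR
  refine ⟨?_, liftPermHom hR hRt hπR '' (Subtype.val ⁻¹' Ψ),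
    (hΨc.preimage Subtype.val_injective).image _, ?_, ?_, ?_⟩
  · filter_upwards [hbij, hπ.ae hne] with x hx hne r
    rw [card_lift_eq hFR hFt hx]
    exact hne r
  · rintro _ ⟨ψ, -, rfl⟩
    exact rel_liftPermHom_apply hR hRt hπR ψ
  · filter_upwards [hbij, hπ.ae hΨgen] with x hx hgen y hxy
    obtain ⟨σ, hσ, hσx⟩ := hgen (π y) (hπR x y hxy)
    obtain ⟨τ, hτ, hτσ⟩ := exists_mem_closure_liftPermHom hR hRt hπR hΨ hσ
    refine ⟨τ, hτ, ?_⟩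
    rw [hτσ, liftFun_eq_iff hx (Subgroup.closure_le _ |>.2 hΨ hσ (π x))]
    exact ⟨hxy, hσx.symm⟩
  · rintro _ ⟨ψ, hψ, rfl⟩
    filter_upwards [hbij, hπ.ae (hΨfol ψ hψ)] with x hx hfol
    refine hfol.congr fun r => ?_
    rw [card_symmDiff_image_lift_eq hR hRt hπR hFR hFt hx, card_lift_eq hFR hFt hx]

theorem UniformFam.lift (hR : Equivalence R) (hRt : Equivalence Rt)
    (hπ : Measure.QuasiMeasurePreserving π μt μ)
    (hbij : ∀ᵐ x ∂μt, IsClassBijectiveAt R Rt π x)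
    (hFR : ∀ r x, ∀ y ∈ F r x, R x y)
    (hFt : ∀ r x y, y ∈ Ft r x ↔ (Rt x y ∧ π y ∈ F r (π x)))
    (h : UniformFam μ F) : UniformFam μt Ft := by
  obtain ⟨Cu, a, b, hCu, hab, hF⟩ := h
  refine ⟨Cu, a, b, hCu, hab, ?_⟩
  filter_upwards [hbij, hπ.ae hF] with x hx hF r
  rw [card_lift_eq hFR hFt hx, ncard_setOf_mem_lift_eq hR hRt hFR hFt hx]
  exact hF r

theorem RegularFam.lift [DecidableEq X] [DecidableEq Xt]
    (hR : Equivalence R) (hRt : Equivalence Rt)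
    (hπ : Measure.QuasiMeasurePreserving π μt μ)
    (hbij : ∀ᵐ x ∂μt, IsClassBijectiveAt R Rt π x)
    (hFR : ∀ r x, ∀ y ∈ F r x, R x y)
    (hFt : ∀ r x y, y ∈ Ft r x ↔ (Rt x y ∧ π y ∈ F r (π x)))
    (h : RegularFam μ F) : RegularFam μt Ft := by
  obtain ⟨C, hC, hF⟩ := h
  refine ⟨C, hC, ?_⟩
  filter_upwards [hbij, hπ.ae hF] with x hx hF r
  rw [ncard_setOf_lift_inter_nonempty_eq hR hRt hFR hFt hx (· ≤ r), card_lift_eq hFR hFt hx]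
  exact hF r

theorem TemperedFam.lift [DecidableEq X] [DecidableEq Xt]
    (hR : Equivalence R) (hRt : Equivalence Rt)
    (hπ : Measure.QuasiMeasurePreserving π μt μ)
    (hbij : ∀ᵐ x ∂μt, IsClassBijectiveAt R Rt π x)
    (hFR : ∀ r x, ∀ y ∈ F r x, R x y)
    (hFt : ∀ r x y, y ∈ Ft r x ↔ (Rt x y ∧ π y ∈ F r (π x)))
    (h : TemperedFam μ F) : TemperedFam μt Ft := by
  obtain ⟨C, hC, hF⟩ := h
  refine ⟨C, hC, ?_⟩
  filter_upwards [hbij, hπ.ae hF] with x hx hF r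
  rw [ncard_setOf_lift_inter_nonempty_eq hR hRt hFR hFt hx (· < r), card_lift_eq hFR hFt hx]
  exact hF r

end Lift

theorem lift_properties_general {X Xt : Type*} [MeasurableSpace X] [MeasurableSpace Xt]
    [DecidableEq X] [DecidableEq Xt]
    (μ : Measure X) (μt : Measure Xt)
    (R : X → X → Prop) (hR : Equivalence R)
    (Rt : Xt → Xt → Prop) (hRt : Equivalence Rt)
    (π : Xt → X) (hπp : MeasurePreserving π μt μ)
    (hπR : ∀ x y, Rt x y → R (π x) (π y))
    (hbij : ∀ᵐ x ∂μt,
      (∀ y z, Rt x y → Rt x z → π y = π z → y = z) ∧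
      (∀ w, R (π x) w → ∃ y, Rt x y ∧ π y = w))
    (F : ℕ → X → Finset X) (hFR : ∀ r x, ∀ y ∈ F r x, R x y)
    (Ft : ℕ → Xt → Finset Xt)
    (hFt : ∀ r x y, y ∈ Ft r x ↔ (Rt x y ∧ π y ∈ F r (π x))) :
    (AsympInvariant μ R F → AsympInvariant μt Rt Ft) ∧
    (UniformFam μ F → UniformFam μt Ft) ∧
    (RegularFam μ F → RegularFam μt Ft) ∧
    (TemperedFam μ F → TemperedFam μt Ft) := by
  have hπ := hπp.quasiMeasurePreserving
  have hbij' : ∀ᵐ x ∂μt, IsClassBijectiveAt R Rt π x :=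
    hbij.mono fun x hx => ⟨fun y => hπR x y, fun y hy z hz => hx.1 y z hy hz, hx.2⟩
  exact ⟨AsympInvariant.lift hR hRt hπR hπ hbij' hFR hFt,
    UniformFam.lift hR hRt hπ hbij' hFR hFt,
    RegularFam.lift hR hRt hπ hbij' hFR hFt,
    TemperedFam.lift hR hRt hπ hbij' hFR hFt⟩

/-- (Bowen–Nevo, §2.6): each of the properties asymptotically invariant, uniform, regular,
tempered lifts through a class-bijective extension of discrete p.m.p. equivalence relations. -/
theorem lift_properties {X Xt : Type*} [MeasurableSpace X] [MeasurableSpace Xt]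
    [DecidableEq X] [DecidableEq Xt]
    (μ : Measure X) [IsProbabilityMeasure μ] (μt : Measure Xt) [IsProbabilityMeasure μt]
    (R : X → X → Prop) (hR : Equivalence R) (hcount : ∀ x, {y | R x y}.Countable)
    (Rt : Xt → Xt → Prop) (hRt : Equivalence Rt) (hcountt : ∀ x, {y | Rt x y}.Countable)
    (hpres : ∀ ψ : Equiv.Perm X, (∀ x, R x (ψ x)) → Measurable (ψ : X → X) →
      Measurable (ψ.symm : X → X) → MeasurePreserving ψ μ μ)
    (hprest : ∀ ψ : Equiv.Perm Xt, (∀ x, Rt x (ψ x)) → Measurable (ψ : Xt → Xt) →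
      Measurable (ψ.symm : Xt → Xt) → MeasurePreserving ψ μt μt)
    (π : Xt → X) (hπm : Measurable π) (hπp : MeasurePreserving π μt μ)
    (hπR : ∀ x y, Rt x y → R (π x) (π y))
    (hbij : ∀ᵐ x ∂μt,
      (∀ y z, Rt x y → Rt x z → π y = π z → y = z) ∧
      (∀ w, R (π x) w → ∃ y, Rt x y ∧ π y = w))
    (F : ℕ → X → Finset X) (hFR : ∀ r x, ∀ y ∈ F r x, R x y)
    (Ft : ℕ → Xt → Finset Xt)
    (hFt : ∀ r x y, y ∈ Ft r x ↔ (Rt x y ∧ π y ∈ F r (π x))) :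
    (AsympInvariant μ R F → AsympInvariant μt Rt Ft) ∧
    (UniformFam μ F → UniformFam μt Ft) ∧
    (RegularFam μ F → RegularFam μt Ft) ∧
    (TemperedFam μ F → TemperedFam μt Ft) :=
  lift_properties_general μ μt R hR Rt hRt π hπp hπR hbij F hFR Ft hFt
end

section
/- Let Γ ↷ (B,ν) be a measure-class-preserving action of a countable group on a standard probability space, and Γ ↷ (X,μ) a p.m.p. action. Then the ratio set of the product action satisfies RS(Γ, B×X, ν×μ) ⊆ RS(Γ, B, ν). -/
/-! Since `μ` is invariant, the Radon–Nikodym cocycle of the product action is, almost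
everywhere, the cocycle of the action on `B` composed with the first projection. Given a
positive-measure `A ⊆ B`, apply the defining property of the product ratio set to `A × X`: the
set `A'` it returns has positive measure, so a positive-measure set of points `b` have a point
`(b, x) ∈ A'` at which the two cocycles agree, and these `b` witness the property for `B`. -/

open MeasureTheory
open scoped ENNReal

/-- The ratio set (asymptotic ratio set) of the Radon–Nikodym cocycle of a nonsingular
action `T` of a group `G` on `(α, ν)`, as a subset of `[0,∞]`.  Here
`(ν.map (T g).symm).rnDeriv ν` plays the role of `dν∘g/dν`. -/
def ratioSet {α G : Type*} [MeasurableSpace α] [Group G]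
    (T : G → α ≃ α) (ν : Measure α) : Set ℝ≥0∞ :=
  {r | if r = ⊤ then
      ∀ A : Set α, MeasurableSet A → 0 < ν A → ∀ n : ℕ,
        ∃ (A' : Set α) (g : G), MeasurableSet A' ∧ A' ⊆ A ∧ 0 < ν A' ∧ g ≠ 1 ∧
          (∀ a ∈ A', T g a ∈ A) ∧
          ∀ a ∈ A', (n : ℝ) < ((ν.map ((T g).symm)).rnDeriv ν a).toReal
    else
      ∀ A : Set α, MeasurableSet A → 0 < ν A → ∀ ε : ℝ, 0 < ε →
        ∃ (A' : Set α) (g : G), MeasurableSet A' ∧ A' ⊆ A ∧ 0 < ν A' ∧ g ≠ 1 ∧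
          (∀ a ∈ A', T g a ∈ A) ∧
          ∀ a ∈ A', |((ν.map ((T g).symm)).rnDeriv ν a).toReal - r.toReal| < ε}

namespace MeasureTheory

variable {α β : Type*} [MeasurableSpace α] [MeasurableSpace β]

theorem Measure.rnDeriv_prod_left_ae {κ ν : Measure α} [SFinite κ] [SigmaFinite ν]
    (μ : Measure β) [SigmaFinite μ] (hκ : κ ≪ ν) :
    (κ.prod μ).rnDeriv (ν.prod μ) =ᵐ[ν.prod μ] fun p => κ.rnDeriv ν p.1 := by
  have hf : Measurable (κ.rnDeriv ν) := κ.measurable_rnDeriv ν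
  calc (κ.prod μ).rnDeriv (ν.prod μ)
      = ((ν.withDensity (κ.rnDeriv ν)).prod μ).rnDeriv (ν.prod μ) := by
        rw [Measure.withDensity_rnDeriv_eq κ ν hκ]
    _ = ((ν.prod μ).withDensity fun p => κ.rnDeriv ν p.1).rnDeriv (ν.prod μ) := by
        rw [prod_withDensity_left hf]
    _ =ᵐ[ν.prod μ] fun p => κ.rnDeriv ν p.1 := Measure.rnDeriv_withDensity _ (by fun_prop)

theorem exists_measurableSet_pos_forall_exists_prodMk_mem {ν : Measure α} {μ : Measure β}
    [SFinite μ] {s : Set (α × β)} (hs : MeasurableSet s) (hpos : 0 < ν.prod μ s) :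
    ∃ t, MeasurableSet t ∧ 0 < ν t ∧ ∀ a ∈ t, ∃ b, (a, b) ∈ s := by
  refine ⟨{a | μ (Prod.mk a ⁻¹' s) ≠ 0},
    measurable_measure_prodMk_left hs (measurableSet_singleton 0).compl, ?_, fun a ha => ?_⟩
  · refine pos_iff_ne_zero.2 fun h => hpos.ne' ((Measure.measure_prod_null hs).2 ?_)
    filter_upwards [measure_eq_zero_iff_ae_notMem.1 h] with a ha
    simpa using ha
  · exact nonempty_of_measure_ne_zero ha

theorem exists_measurableSet_pos_forall_exists_prodMk_mem_of_ae {ν : Measure α} {μ : Measure β}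
    [SFinite μ] {s : Set (α × β)} (hs : MeasurableSet s) (hpos : 0 < ν.prod μ s)
    {q : α × β → Prop} (hq : ∀ᵐ p ∂ν.prod μ, q p) :
    ∃ t, MeasurableSet t ∧ 0 < ν t ∧ ∀ a ∈ t, ∃ b, (a, b) ∈ s ∧ q (a, b) := by
  obtain ⟨u, hu, hum, huq⟩ := hq.exists_measurable_mem
  obtain ⟨t, htm, htpos, ht⟩ := exists_measurableSet_pos_forall_exists_prodMk_mem (hs.inter hum)
    (by rwa [measure_inter_conull (compl_mem_ae_iff.1 (by simpa using hu))])
  exact ⟨t, htm, htpos, fun a ha => (ht a ha).imp fun b hb => ⟨hb.1, huq _ hb.2⟩⟩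

theorem rnDeriv_map_prodCongr_symm_ae {ν : Measure α} [SigmaFinite ν] {μ : Measure β}
    [SigmaFinite μ]
    (e : α ≃ᵐ α) (f : β ≃ᵐ β) (he : ν ≪ ν.map e) (hf : MeasurePreserving f μ μ) :
    ((ν.prod μ).map (e.prodCongr f).symm).rnDeriv (ν.prod μ)
      =ᵐ[ν.prod μ] fun p => (ν.map e.symm).rnDeriv ν p.1 := by
  have hmap : (ν.prod μ).map (e.prodCongr f).symm = (ν.map e.symm).prod μ := by
    conv_rhs => rw [← hf.symm.map_eq]
    rw [Measure.map_prod_map _ _ e.symm.measurable f.symm.measurable]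
    rfl
  have hκ : ν.map e.symm ≪ ν := by
    simpa only [e.map_symm_map] using he.map e.symm.measurable
  rw [hmap]
  exact Measure.rnDeriv_prod_left_ae μ hκ

end MeasureTheory

def RecurrentWithRatio {α G : Type*} [MeasurableSpace α] [Group G]
    (T : G → α ≃ α) (ν : Measure α) (P : ℝ≥0∞ → Prop) : Prop :=
  ∀ A : Set α, MeasurableSet A → 0 < ν A →
    ∃ (A' : Set α) (g : G), MeasurableSet A' ∧ A' ⊆ A ∧ 0 < ν A' ∧ g ≠ 1 ∧
      (∀ a ∈ A', T g a ∈ A) ∧ ∀ a ∈ A', P ((ν.map (T g).symm).rnDeriv ν a)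

theorem mem_ratioSet_iff {α G : Type*} [MeasurableSpace α] [Group G]
    {T : G → α ≃ α} {ν : Measure α} {r : ℝ≥0∞} :
    r ∈ ratioSet T ν ↔ if r = ⊤ then ∀ n : ℕ, RecurrentWithRatio T ν (fun v => n < v.toReal)
      else ∀ ε : ℝ, 0 < ε → RecurrentWithRatio T ν (fun v => |v.toReal - r.toReal| < ε) := by
  simp only [ratioSet, RecurrentWithRatio, Set.mem_ofPred_eq]
  split_ifs
  · exact ⟨fun h n A hA hpos => h A hA hpos n, fun h A hA hpos n => h n A hA hpos⟩
  · exact ⟨fun h ε hε A hA hpos => h A hA hpos ε hε, fun h A hA hpos ε hε => h ε hε A hA hpos⟩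

theorem RecurrentWithRatio.of_prodCongr {α β G : Type*} [MeasurableSpace α] [MeasurableSpace β]
    [Group G] {ν : Measure α} [SigmaFinite ν] {μ : Measure β} [SigmaFinite μ] [NeZero μ]
    {T : G → α ≃ α} {S : G → β ≃ β}
    (hT : ∀ g, Measurable (T g) ∧ Measurable (T g).symm)
    (hS : ∀ g, Measurable (S g) ∧ Measurable (S g).symm)
    (hν : ∀ g, ν ≪ ν.map (T g)) (hμ : ∀ g, MeasurePreserving (S g) μ μ) {P : ℝ≥0∞ → Prop}
    (h : RecurrentWithRatio (fun g => (T g).prodCongr (S g)) (ν.prod μ) P) :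
    RecurrentWithRatio T ν P := by
  intro A hA hApos
  obtain ⟨A', g, hA'm, hA'A, hA'pos, hg, hmaps, hP⟩ := h (A ×ˢ Set.univ) (hA.prod .univ)
    (by rw [Measure.prod_prod]; exact ENNReal.mul_pos hApos.ne' (NeZero.ne _))
  obtain ⟨t, htm, htpos, ht⟩ := exists_measurableSet_pos_forall_exists_prodMk_mem_of_ae hA'm
    hA'pos (rnDeriv_map_prodCongr_symm_ae ⟨T g, (hT g).1, (hT g).2⟩
      ⟨S g, (hS g).1, (hS g).2⟩ (hν g) (hμ g))
  refine ⟨t, g, htm, fun a ha => ?_, htpos, hg, fun a ha => ?_, fun a ha => ?_⟩ <;>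
    obtain ⟨b, hab, hcocycle⟩ := ht a ha
  · exact (hA'A hab).1
  · exact (hmaps _ hab).1
  · convert hP _ hab using 1
    exact hcocycle.symm

/-- (Bowen–Nevo, §4.1): for a nonsingular action on `(B,ν)` and a p.m.p. action on `(X,μ)`,
the ratio set of the product action is contained in the ratio set of the action on `(B,ν)`. -/
theorem ratioSet_prod_subset {B X G : Type*} [MeasurableSpace B] [MeasurableSpace X] [Group G]
    (ν : Measure B) [IsProbabilityMeasure ν] (μ : Measure X) [IsProbabilityMeasure μ]
    (TB : G → B ≃ B) (TX : G → X ≃ X)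
    (hTBm : ∀ g, Measurable (TB g : B → B) ∧ Measurable ((TB g).symm : B → B))
    (hTXm : ∀ g, Measurable (TX g : X → X) ∧ Measurable ((TX g).symm : X → X))
    (hqi : ∀ g, ν.map (TB g) ≪ ν ∧ ν ≪ ν.map (TB g))
    (hμinv : ∀ g, MeasurePreserving (TX g : X → X) μ μ) :
    ratioSet (fun g => (TB g).prodCongr (TX g)) (ν.prod μ) ⊆ ratioSet TB ν := by
  intro r hr
  rw [mem_ratioSet_iff] at hr ⊢
  have transfer := fun P => RecurrentWithRatio.of_prodCongr (P := P) hTBm hTXm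
    (fun g => (hqi g).2) hμinv
  split_ifs at hr ⊢
  · exact fun n => transfer _ (hr n)
  · exact fun ε hε => transfer _ (hr ε hε)
end
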